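/- The function w(x) = sin(k|x−z|)/|x−z|, extended by w(z) = k, is smooth on all of ℝ³ and satisfies the Helmholtz equation Δw + k²w = 0 everywhere on ℝ³. -/

import Mathlib

open Real

open Filter

/-- The Euclidean Laplacian of a function on `ℝⁿ`, as the sum of second partial
derivatives along the standard orthonormal basis. -/
noncomputable def euclideanLaplacian {n : ℕ} (f : EuclideanSpace ℝ (Fin n) → ℝ)
    (x : EuclideanSpace ℝ (Fin n)) : ℝ :=
  ∑ i : Fin n,
    fderiv ℝ (fun y => fderiv ℝ f y (EuclideanSpace.single i (1 : ℝ))) x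
      (EuclideanSpace.single i (1 : ℝ))


noncomputable def sincCoeff : ℕ → ℝ := fun n => (-1) ^ n / ((2 * n + 1).factorial : ℝ)

noncomputable def sincSeries : FormalMultilinearSeries ℝ ℝ ℝ :=
  FormalMultilinearSeries.ofScalars ℝ sincCoeff

lemma sincCoeff_norm (n : ℕ) : ‖sincCoeff n‖ = (((2 * n + 1).factorial : ℝ))⁻¹ := by
  rw [sincCoeff, norm_div, norm_pow, norm_neg, norm_one, one_pow, one_div]
  congr 1
  rw [Real.norm_eq_abs, abs_of_nonneg (by positivity)]

lemma sincSeries_radius : sincSeries.radius = ⊤ := by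
  apply FormalMultilinearSeries.ofScalars_radius_eq_top_of_tendsto
  · refine Eventually.of_forall fun n => ?_
    have : ((2 * n + 1).factorial : ℝ) > 0 := by positivity
    simp only [sincCoeff, ne_eq, div_eq_zero_iff, pow_eq_zero_iff', neg_eq_zero, one_ne_zero,
      false_and, false_or]
    positivity
  · apply squeeze_zero (fun n => by positivity) (g := fun n : ℕ => 1 / (n + 1 : ℝ))
    · intro n
      have hfact : ((2 * n.succ + 1).factorial : ℝ)
          = ((2*n+3) : ℝ) * ((2*n+2) : ℝ) * ((2 * n + 1).factorial : ℝ) := by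
        have : 2 * n.succ + 1 = (2 * n + 1) + 1 + 1 := by omega
        rw [this, Nat.factorial_succ, Nat.factorial_succ]
        push_cast; ring
      rw [sincCoeff_norm, sincCoeff_norm, hfact]
      have h1 : (0:ℝ) < ((2 * n + 1).factorial : ℝ) := by positivity
      rw [show ((2*(n:ℝ)+3) * (2*(n:ℝ)+2) * ((2*n+1).factorial:ℝ))⁻¹ / ((2*n+1).factorial:ℝ)⁻¹
          = ((2*(n:ℝ)+3) * (2*(n:ℝ)+2))⁻¹ from by field_simp]
      rw [one_div, inv_le_inv₀ (by positivity) (by positivity)]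
      nlinarith [Nat.cast_nonneg (α := ℝ) n]
    · exact tendsto_one_div_add_atTop_nhds_zero_nat

noncomputable def sincF : ℝ → ℝ := sincSeries.sum

lemma sincF_hasSum (x : ℝ) : HasSum (fun n => sincCoeff n * x ^ n) (sincF x) := by
  have := sincSeries.hasSum (x := x) (by rw [sincSeries_radius]; exact edist_lt_top x 0)
  simp only [sincSeries, FormalMultilinearSeries.ofScalars_apply_eq, smul_eq_mul] at this
  exact this

lemma sincF_zero : sincF 0 = 1 := by
  have h := sincF_hasSum 0
  have h2 : HasSum (fun n : ℕ => sincCoeff n * (0:ℝ) ^ n) (1 : ℝ) := by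
    have : (fun n : ℕ => sincCoeff n * (0:ℝ) ^ n) 0 = 1 := by
      simp [sincCoeff]
    rw [← this]
    apply hasSum_single
    intro b hb
    simp [zero_pow hb]
  exact h.unique h2

lemma sincF_id (t : ℝ) : t * sincF (t ^ 2) = Real.sin t := by
  have h := (sincF_hasSum (t ^ 2)).mul_left t
  have h2 : (fun n => t * (sincCoeff n * (t ^ 2) ^ n))
      = fun n : ℕ => (-1) ^ n * t ^ (2 * n + 1) / ((2 * n + 1).factorial : ℝ) := by
    funext n
    rw [sincCoeff, ← pow_mul, pow_succ]
    ring
  rw [h2] at h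
  exact h.unique (Real.hasSum_sin t)

lemma sincF_analytic : AnalyticOnNhd ℝ sincF Set.univ := by
  intro y _
  have hb : HasFPowerSeriesOnBall sincF sincSeries 0 ⊤ := by
    have := sincSeries.hasFPowerSeriesOnBall (by rw [sincSeries_radius]; exact ENNReal.zero_lt_top)
    rwa [sincSeries_radius] at this
  exact hb.analyticAt_of_mem (by simp [EMetric.mem_ball])

noncomputable def sincF' : ℝ → ℝ := deriv sincF
noncomputable def sincF'' : ℝ → ℝ := deriv sincF'

lemma sincF'_analytic : AnalyticOnNhd ℝ sincF' Set.univ := sincF_analytic.deriv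
lemma sincF''_analytic : AnalyticOnNhd ℝ sincF'' Set.univ := sincF'_analytic.deriv

lemma sincF_hasDerivAt (s : ℝ) : HasDerivAt sincF (sincF' s) s :=
  ((sincF_analytic s trivial).differentiableAt).hasDerivAt

lemma sincF'_hasDerivAt (s : ℝ) : HasDerivAt sincF' (sincF'' s) s :=
  ((sincF'_analytic s trivial).differentiableAt).hasDerivAt

lemma sincF_sq_hasDerivAt (t : ℝ) :
    HasDerivAt (fun t : ℝ => sincF (t ^ 2)) (sincF' (t ^ 2) * (2 * t)) t := by
  have hsq : HasDerivAt (fun t : ℝ => t ^ 2) (2 * t) t := by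
    simpa using hasDerivAt_pow 2 t
  exact (sincF_hasDerivAt (t ^ 2)).comp t hsq

lemma sincF_id2 (t : ℝ) : Real.cos t = sincF (t ^ 2) + 2 * t ^ 2 * sincF' (t ^ 2) := by
  have hg : HasDerivAt (fun t : ℝ => t * sincF (t ^ 2))
      (sincF (t ^ 2) + 2 * t ^ 2 * sincF' (t ^ 2)) t := by
    have := (hasDerivAt_id t).mul (sincF_sq_hasDerivAt t)
    refine this.congr_deriv ?_
    simp only [id_eq, one_mul]
    ring
  have hfun : (fun t : ℝ => t * sincF (t ^ 2)) = Real.sin := funext sincF_id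
  rw [hfun] at hg
  exact (Real.hasDerivAt_sin t).unique hg

lemma sincF_id3 (t : ℝ) :
    -Real.sin t = 6 * t * sincF' (t ^ 2) + 4 * t ^ 3 * sincF'' (t ^ 2) := by
  have hsq : HasDerivAt (fun t : ℝ => t ^ 2) (2 * t) t := by
    simpa using hasDerivAt_pow 2 t
  have hF' : HasDerivAt (fun t : ℝ => sincF' (t ^ 2)) (sincF'' (t ^ 2) * (2 * t)) t :=
    (sincF'_hasDerivAt (t ^ 2)).comp t hsq
  have h2 : HasDerivAt (fun t : ℝ => 2 * t ^ 2) (2 * (2 * t)) t := hsq.const_mul 2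
  have hg : HasDerivAt (fun t : ℝ => sincF (t ^ 2) + 2 * t ^ 2 * sincF' (t ^ 2))
      (6 * t * sincF' (t ^ 2) + 4 * t ^ 3 * sincF'' (t ^ 2)) t := by
    have := (sincF_sq_hasDerivAt t).add (h2.mul hF')
    refine this.congr_deriv ?_
    ring
  have hfun : (fun t : ℝ => sincF (t ^ 2) + 2 * t ^ 2 * sincF' (t ^ 2)) = Real.cos :=
    funext fun t => (sincF_id2 t).symm
  rw [hfun] at hg
  exact (Real.hasDerivAt_cos t).unique hg

lemma sincF_ode (s : ℝ) (hs : 0 ≤ s) :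
    4 * s * sincF'' s + 6 * sincF' s + sincF s = 0 := by
  rcases hs.lt_or_eq with hs' | hs'
  · set t := Real.sqrt s with ht
    have hts : t ^ 2 = s := Real.sq_sqrt hs
    have htpos : 0 < t := Real.sqrt_pos.mpr hs'
    rw [← hts]
    apply mul_left_cancel₀ (ne_of_gt htpos)
    rw [mul_zero]
    linear_combination sincF_id t - sincF_id3 t
  · -- s = 0 : by continuity
    set φ : ℝ → ℝ := fun s => 4 * s * sincF'' s + 6 * sincF' s + sincF s with hφ
    have hφc : ContinuousAt φ 0 := by
      apply ContinuousAt.add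
      apply ContinuousAt.add
      · exact (continuousAt_const.mul continuousAt_id).mul
          (sincF''_analytic 0 trivial).continuousAt
      · exact continuousAt_const.mul (sincF'_analytic 0 trivial).continuousAt
      · exact (sincF_analytic 0 trivial).continuousAt
    have h1 : Filter.Tendsto φ (nhdsWithin 0 (Set.Ioi 0)) (nhds (φ 0)) :=
      hφc.continuousWithinAt.tendsto
    have h2 : Filter.Tendsto φ (nhdsWithin 0 (Set.Ioi 0)) (nhds 0) := by
      apply Filter.Tendsto.congr' _ tendsto_const_nhds
      filter_upwards [self_mem_nhdsWithin] with x hx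
      have hx' : (0:ℝ) < x := hx
      set t := Real.sqrt x with ht
      have hts : t ^ 2 = x := Real.sq_sqrt hx'.le
      have htpos : 0 < t := Real.sqrt_pos.mpr hx'
      rw [hφ]
      simp only
      rw [← hts]
      symm
      apply mul_left_cancel₀ (ne_of_gt htpos)
      rw [mul_zero]
      linear_combination sincF_id t - sincF_id3 t
    have := tendsto_nhds_unique h1 h2
    rw [← hs']
    rw [hφ] at this
    simpa using this

local notation "E3" => EuclideanSpace ℝ (Fin 3)

lemma W_hasFDerivAt (k : ℝ) (z y : E3) :
    HasFDerivAt (fun x : E3 => k * sincF (k ^ 2 * (inner ℝ (x - z) (x - z) : ℝ)))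
      ((2 * k ^ 3 * sincF' (k ^ 2 * (inner ℝ (y - z) (y - z) : ℝ))) • innerSL ℝ (y - z)) y := by
  have h1 : HasFDerivAt (fun x : E3 => x - z) (ContinuousLinearMap.id ℝ E3) y := by
    simpa using (hasFDerivAt_id y).sub_const z
  have h2 := h1.inner ℝ h1
  have h3 := h2.const_mul (k ^ 2)
  have h4 := (sincF_hasDerivAt (k ^ 2 * (inner ℝ (y - z) (y - z) : ℝ))).comp_hasFDerivAt y h3
  have h5 := h4.const_mul k
  refine h5.congr_fderiv ?_
  ext v
  simp only [ContinuousLinearMap.smul_apply, innerSL_apply_apply, fderivInnerCLM_apply,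
    ContinuousLinearMap.coe_comp', Function.comp_apply, ContinuousLinearMap.prod_apply,
    ContinuousLinearMap.id_apply, smul_eq_mul]
  rw [real_inner_comm v (y - z)]
  ring

lemma W_fderiv_apply (k : ℝ) (z y v : E3) :
    fderiv ℝ (fun x : E3 => k * sincF (k ^ 2 * (inner ℝ (x - z) (x - z) : ℝ))) y v
      = 2 * k ^ 3 * sincF' (k ^ 2 * (inner ℝ (y - z) (y - z) : ℝ)) * (inner ℝ (y - z) v : ℝ) := by
  rw [(W_hasFDerivAt k z y).fderiv]
  simp only [ContinuousLinearMap.smul_apply, innerSL_apply_apply, smul_eq_mul]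

lemma W_second (k : ℝ) (z x : E3) (e : E3) :
    fderiv ℝ (fun y : E3 =>
        fderiv ℝ (fun x : E3 => k * sincF (k ^ 2 * (inner ℝ (x - z) (x - z) : ℝ))) y e) x e
      = 4 * k ^ 5 * sincF'' (k ^ 2 * (inner ℝ (x - z) (x - z) : ℝ)) * (inner ℝ (x - z) e : ℝ) ^ 2
        + 2 * k ^ 3 * sincF' (k ^ 2 * (inner ℝ (x - z) (x - z) : ℝ)) * (inner ℝ e e : ℝ) := by
  have hfun : (fun y : E3 =>
        fderiv ℝ (fun x : E3 => k * sincF (k ^ 2 * (inner ℝ (x - z) (x - z) : ℝ))) y e)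
      = fun y : E3 =>
        2 * k ^ 3 * sincF' (k ^ 2 * (inner ℝ (y - z) (y - z) : ℝ)) * (inner ℝ (y - z) e : ℝ) := by
    funext y; rw [W_fderiv_apply]
  rw [hfun]
  have h1 : HasFDerivAt (fun x : E3 => x - z) (ContinuousLinearMap.id ℝ E3) x := by
    simpa using (hasFDerivAt_id x).sub_const z
  have h2 := h1.inner ℝ h1
  have h3 := h2.const_mul (k ^ 2)
  have hA := ((sincF'_hasDerivAt
    (k ^ 2 * (inner ℝ (x - z) (x - z) : ℝ))).comp_hasFDerivAt x h3).const_mul (2 * k ^ 3)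
  have hB := h1.inner ℝ (hasFDerivAt_const e x)
  have hAB := hA.mul hB
  have hAB' : HasFDerivAt (fun y : E3 =>
      2 * k ^ 3 * sincF' (k ^ 2 * (inner ℝ (y - z) (y - z) : ℝ)) * (inner ℝ (y - z) e : ℝ)) _ x := hAB
  rw [hAB'.fderiv]
  simp only [ContinuousLinearMap.add_apply, ContinuousLinearMap.smul_apply, innerSL_apply_apply,
    fderivInnerCLM_apply, ContinuousLinearMap.coe_comp', Function.comp_apply,
    ContinuousLinearMap.prod_apply, ContinuousLinearMap.id_apply, smul_eq_mul,
    ContinuousLinearMap.zero_apply, inner_zero_right, add_zero, zero_add]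
  rw [real_inner_comm e (x - z)]
  ring


/-- the function `w(x) = sin(k|x−z|)/|x−z|`, extended by `w(z) = k`,
is smooth on all of `ℝ³` and satisfies `Δw + k²w = 0` everywhere. -/
theorem spherical_bessel_kernel_smooth_and_helmholtz (k : ℝ) (hk : 0 < k)
    (z : EuclideanSpace ℝ (Fin 3)) :
    ∀ w : EuclideanSpace ℝ (Fin 3) → ℝ,
      (∀ x, x ≠ z → w x = Real.sin (k * ‖x - z‖) / ‖x - z‖) → w z = k →
      ContDiff ℝ (⊤ : ℕ∞) w ∧ ∀ x, euclideanLaplacian w x + k ^ 2 * w x = 0 := by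
  intro w hw hz
  have hweq : w = fun x : E3 => k * sincF (k ^ 2 * (inner ℝ (x - z) (x - z) : ℝ)) := by
    funext x
    by_cases hx : x = z
    · subst hx
      simp only [sub_self, inner_zero_left, mul_zero, sincF_zero, mul_one]
      exact hz
    · rw [hw x hx]
      have hn : ‖x - z‖ ≠ 0 := by
        simpa [sub_eq_zero] using hx
      have harg : k ^ 2 * (inner ℝ (x - z) (x - z) : ℝ) = (k * ‖x - z‖) ^ 2 := by
        rw [real_inner_self_eq_norm_sq]
        ring
      rw [harg, ← sincF_id (k * ‖x - z‖)]
      field_simp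
  rw [hweq]
  constructor
  · have hsc : ContDiff ℝ (⊤ : ℕ∞) sincF := sincF_analytic.contDiff
    have hu : ContDiff ℝ (⊤ : ℕ∞) (fun x : E3 => k ^ 2 * (inner ℝ (x - z) (x - z) : ℝ)) :=
      contDiff_const.mul (ContDiff.inner ℝ (contDiff_id.sub contDiff_const)
        (contDiff_id.sub contDiff_const))
    exact contDiff_const.mul (hsc.comp hu)
  · intro x
    have hsum : euclideanLaplacian
        (fun x : E3 => k * sincF (k ^ 2 * (inner ℝ (x - z) (x - z) : ℝ))) x
        = ∑ i : Fin 3,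
          (4 * k ^ 5 * sincF'' (k ^ 2 * (inner ℝ (x - z) (x - z) : ℝ))
              * (inner ℝ (x - z) (EuclideanSpace.single i (1:ℝ)) : ℝ) ^ 2
            + 2 * k ^ 3 * sincF' (k ^ 2 * (inner ℝ (x - z) (x - z) : ℝ))
              * (inner ℝ (EuclideanSpace.single i (1:ℝ)) (EuclideanSpace.single i (1:ℝ)) : ℝ)) := by
      unfold euclideanLaplacian
      exact Finset.sum_congr rfl fun i _ => W_second k z x _
    rw [hsum, Finset.sum_add_distrib]
    have hS1 : ∑ i : Fin 3,
        (4 * k ^ 5 * sincF'' (k ^ 2 * (inner ℝ (x - z) (x - z) : ℝ))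
          * (inner ℝ (x - z) (EuclideanSpace.single i (1:ℝ)) : ℝ) ^ 2)
        = 4 * k ^ 5 * sincF'' (k ^ 2 * (inner ℝ (x - z) (x - z) : ℝ))
            * (inner ℝ (x - z) (x - z) : ℝ) := by
      rw [← Finset.mul_sum]
      congr 1
      simp only [EuclideanSpace.inner_single_right, RCLike.inner_apply, conj_trivial, one_mul]
      rw [PiLp.inner_apply]
      simp [RCLike.inner_apply, conj_trivial, pow_two]
    have hS2 : ∑ i : Fin 3,
        (2 * k ^ 3 * sincF' (k ^ 2 * (inner ℝ (x - z) (x - z) : ℝ))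
          * (inner ℝ (EuclideanSpace.single i (1:ℝ)) (EuclideanSpace.single i (1:ℝ)) : ℝ))
        = 2 * k ^ 3 * sincF' (k ^ 2 * (inner ℝ (x - z) (x - z) : ℝ)) * 3 := by
      rw [← Finset.mul_sum]
      congr 1
      simp [EuclideanSpace.inner_single_left, EuclideanSpace.single_apply]
    rw [hS1, hS2]
    have hQ : (0:ℝ) ≤ k ^ 2 * (inner ℝ (x - z) (x - z) : ℝ) :=
      mul_nonneg (sq_nonneg k) real_inner_self_nonneg
    have hode := sincF_ode _ hQ
    linear_combination k ^ 3 * hode
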